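/- arXiv:2105.12467 — 2 statements merged into one kernel-verified Lean document; each statement's English description precedes it below -/
import Mathlib

section
/- With λ the uniform product measure on 2^ω, χ_n(A) = min{λ(A △ B) : B ∈ F_n}, and 𝔹 = {A Borel : lim n·χ_n(A) = 0}: every A ∈ 𝔹 satisfies lim_{n→∞} n·(λ(S_n^0 ∩ A) − λ(S_n^1 ∩ A)) = 0, where S_n^i = {x : x(n) = i}. That is, 𝔹 ⊆ 𝔸. -/
open MeasureTheory Filter Topology

/-- The cylinder in Cantor space determined by `σ : 2^n`. -/
def cyl (n : ℕ) (σ : Fin n → Bool) : Set (ℕ → Bool) := {x | ∀ i : Fin n, x i = σ i}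

/-- The finite Boolean algebra `F_n` of unions of cylinders of length `n`. -/
def FnAlg (n : ℕ) : Set (Set (ℕ → Bool)) :=
  {B | ∃ S : Set (Fin n → Bool), B = ⋃ σ ∈ S, cyl n σ}

/-- `χ_n(A) = min{λ(A △ B) : B ∈ F_n}`. -/
noncomputable def chi (lam : Measure (ℕ → Bool)) (n : ℕ) (A : Set (ℕ → Bool)) : ℝ :=
  sInf {r : ℝ | ∃ B ∈ FnAlg n, r = (lam (symmDiff A B)).toReal}

/-- The family `𝔹 = {A Borel : lim n·χ_n(A) = 0}`. -/
def BB (lam : Measure (ℕ → Bool)) : Set (Set (ℕ → Bool)) :=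
  {A | MeasurableSet A ∧
    Tendsto (fun n : ℕ => (n : ℝ) * chi lam n A) atTop (𝓝 0)}

/-- `S n i = {x : x(n) = i}`. -/
def Sset (n : ℕ) (i : Bool) : Set (ℕ → Bool) := {x | x n = i}

/-!
Each set `B ∈ F_n` is balanced at coordinate `n`: every cylinder of length `n` splits into two
cylinders of length `n + 1` and equal measure, so `λ(S_n^0 ∩ B) = λ(S_n^1 ∩ B)`. The imbalance
`λ(S_n^0 ∩ A) - λ(S_n^1 ∩ A)` moves by at most `2 λ(A △ B)` when `A` is replaced by `B`, hence it
is bounded by `2 χ_n(A)`, and `n χ_n(A) → 0` forces `n` times the imbalance to tend to `0`.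
-/

open scoped symmDiff

lemma measurableSet_cyl (n : ℕ) (σ : Fin n → Bool) : MeasurableSet (cyl n σ) := by
  simp only [cyl, Set.ofPred_forall]
  exact .iInter fun i => measurableSet_eq_fun (measurable_pi_apply _) measurable_const

lemma measurableSet_Sset (n : ℕ) (i : Bool) : MeasurableSet (Sset n i) :=
  measurableSet_eq_fun (measurable_pi_apply n) measurable_const

lemma disjoint_cyl {n : ℕ} {σ τ : Fin n → Bool} (h : σ ≠ τ) : Disjoint (cyl n σ) (cyl n τ) :=
  Set.disjoint_left.2 fun _ hσ hτ => h <| funext fun i => (hσ i).symm.trans (hτ i)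

lemma Sset_inter_cyl (n : ℕ) (i : Bool) (σ : Fin n → Bool) :
    Sset n i ∩ cyl n σ = cyl (n + 1) (Fin.snoc σ i) := by
  ext x
  simp [Sset, cyl, Fin.forall_fin_succ', and_comm]

lemma measure_Sset_false_inter_eq_true_inter {lam : Measure (ℕ → Bool)}
    (hlam : ∀ (n : ℕ) (σ : Fin n → Bool), lam (cyl n σ) = (1 / 2 : ENNReal) ^ n)
    {n : ℕ} {B : Set (ℕ → Bool)} (hB : B ∈ FnAlg n) :
    lam (Sset n false ∩ B) = lam (Sset n true ∩ B) := by
  obtain ⟨S, rfl⟩ := hB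
  have measure_eq (i : Bool) :
      lam (Sset n i ∩ ⋃ σ ∈ S, cyl n σ) = ∑' _ : S, (1 / 2 : ENNReal) ^ (n + 1) := by
    rw [Set.inter_iUnion₂, measure_biUnion S.to_countable
      (fun σ _ τ _ hστ => (disjoint_cyl hστ).mono Set.inter_subset_right Set.inter_subset_right)
      (fun σ _ => (measurableSet_Sset n i).inter (measurableSet_cyl n σ))]
    simp only [Sset_inter_cyl, hlam]
  rw [measure_eq, measure_eq]

section

variable {α : Type*} [MeasurableSpace α] (μ : Measure α) [IsFiniteMeasure μ]

lemma measureReal_inter_le_add_symmDiff (S A B : Set α) :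
    μ.real (S ∩ A) ≤ μ.real (S ∩ B) + μ.real (A ∆ B) :=
  calc μ.real (S ∩ A) ≤ μ.real (S ∩ B ∪ A ∆ B) := measureReal_mono fun x ⟨hS, hA⟩ =>
        (em (x ∈ B)).imp (⟨hS, ·⟩) fun hB => Or.inl ⟨hA, hB⟩
    _ ≤ _ := measureReal_union_le _ _

lemma abs_measureReal_inter_sub_le_symmDiff (S A B : Set α) :
    |μ.real (S ∩ A) - μ.real (S ∩ B)| ≤ μ.real (A ∆ B) := by
  have h₁ := measureReal_inter_le_add_symmDiff μ S A B
  have h₂ := measureReal_inter_le_add_symmDiff μ S B A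
  rw [symmDiff_comm] at h₂
  exact abs_sub_le_iff.2 ⟨by linarith, by linarith⟩

end

section

variable {lam : Measure (ℕ → Bool)} [IsFiniteMeasure lam]
  (hlam : ∀ (n : ℕ) (σ : Fin n → Bool), lam (cyl n σ) = (1 / 2 : ENNReal) ^ n)
include hlam

lemma abs_measureReal_Sset_sub_le_two_mul_symmDiff {n : ℕ} (A : Set (ℕ → Bool))
    {B : Set (ℕ → Bool)} (hB : B ∈ FnAlg n) :
    |lam.real (Sset n false ∩ A) - lam.real (Sset n true ∩ A)| ≤ 2 * lam.real (A ∆ B) := by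
  have hB_balanced : lam.real (Sset n false ∩ B) = lam.real (Sset n true ∩ B) :=
    congrArg ENNReal.toReal (measure_Sset_false_inter_eq_true_inter hlam hB)
  have h_false := abs_measureReal_inter_sub_le_symmDiff lam (Sset n false) A B
  have h_true := abs_measureReal_inter_sub_le_symmDiff lam (Sset n true) A B
  rw [abs_le] at h_false h_true ⊢
  constructor <;> linarith [h_false.1, h_false.2, h_true.1, h_true.2]

lemma abs_measureReal_Sset_sub_le_two_mul_chi (n : ℕ) (A : Set (ℕ → Bool)) :
    |lam.real (Sset n false ∩ A) - lam.real (Sset n true ∩ A)| ≤ 2 * chi lam n A := by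
  rw [← div_le_iff₀' two_pos]
  refine le_csInf ⟨_, ∅, ⟨∅, by simp⟩, rfl⟩ ?_
  rintro _ ⟨B, hB, rfl⟩
  rw [div_le_iff₀' two_pos]
  exact abs_measureReal_Sset_sub_le_two_mul_symmDiff hlam A hB

end

theorem BB_subset_AA
    (lam : Measure (ℕ → Bool)) [IsProbabilityMeasure lam]
    (hlam : ∀ (n : ℕ) (σ : Fin n → Bool), lam (cyl n σ) = (1 / 2 : ENNReal) ^ n) :
    ∀ A ∈ BB lam, Tendsto
      (fun n : ℕ => (n : ℝ) *
        ((lam (Sset n false ∩ A)).toReal - (lam (Sset n true ∩ A)).toReal))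
      atTop (𝓝 0) := by
  rintro A ⟨-, hA⟩
  refine squeeze_zero_norm (fun n => ?_) (by simpa using hA.const_mul 2)
  rw [Real.norm_eq_abs, abs_mul, Nat.abs_cast]
  calc (n : ℝ) * |(lam (Sset n false ∩ A)).toReal - (lam (Sset n true ∩ A)).toReal|
      ≤ n * (2 * chi lam n A) :=
        mul_le_mul_of_nonneg_left (abs_measureReal_Sset_sub_le_two_mul_chi hlam n A)
          n.cast_nonneg
    _ = 2 * (n * chi lam n A) := by ring
end

section
/- Let A be an infinite Boolean algebra with Stone space St(A), μ a bounded finitely additive measure on A with Radon extension μ̂ on St(A), and (B_n)_{n∈ω} an antichain in A. Let (A_ζ)_{ζ<ω₁} be an almost disjoint family of infinite subsets of ω. For each ζ < ω₁ and i ∈ A_ζ let C_i^ζ ∈ A satisfy C_i^ζ ≤ B_i, and assume the supremum S_ζ = ⋁{C_i^ζ : i ∈ A_ζ} exists in A. Then there exists η < ω₁ such that for every ζ ∈ [η, ω₁), the boundary in St(A) of the open set ∪_{i∈A_ζ} C_i^ζ (clopen sets viewed as subsets of St(A)) is |μ̂|-null. -/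
/-!
Write `U_ζ = ⋃_{i ∈ A_ζ} C_i^ζ` and `S_ζ` for its supremum in the clopen algebra. Since the `B_i`
are pairwise disjoint, `S_ξ` is disjoint from every `B_i` with `i ∉ A_ξ`, so `U_ζ ∩ S_ξ` lies in the
finite union of the `C_i^ζ` with `i ∈ A_ζ ∩ A_ξ`: a clopen subset of `U_ζ`. Hence the frontier of
`U_ζ` misses `S_ξ`, which contains the frontier of `U_ξ`. The frontiers are thus pairwise disjoint
closed sets, only countably many of them have positive `|μ̂|`-measure, and a countable set of
countable ordinals is bounded below `ω₁`.
-/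

open MeasureTheory TopologicalSpace

/-- The first uncountable ordinal `ω₁`. -/
noncomputable def omega1 : Ordinal := (Cardinal.aleph 1).ord

open Set Ordinal Function

theorem IsLUB.disjoint_of_forall_disjoint {α : Type*} [GeneralizedBooleanAlgebra α] {s : Set α}
    {a b : α} (ha : IsLUB s a) (hs : ∀ c ∈ s, Disjoint c b) : Disjoint a b := by
  have hle : a ≤ a \ b := ha.2 fun c hc => le_sdiff.2 ⟨ha.1 hc, hs c hc⟩
  exact disjoint_sdiff_self_left.mono_left hle

theorem disjoint_frontier_of_inter_subset {X : Type*} [TopologicalSpace X] {U W F : Set X}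
    (hU : IsOpen U) (hW : IsOpen W) (hF : IsClosed F) (hFU : F ⊆ U) (hUW : U ∩ W ⊆ F) :
    Disjoint (frontier U) W := by
  refine disjoint_left.2 fun x hx hxW => hx.2 ?_
  have hxF : x ∈ closure F := closure_mono hUW (hW.closure_inter ⟨frontier_subset_closure hx, hxW⟩)
  rw [hU.interior_eq]
  exact hFU (hF.closure_eq ▸ hxF)

theorem biUnion_inter_subset_of_disjoint {α ι : Type*} {B C : ι → Set α} {W : Set α}
    {s t : Set ι} (hC : ∀ i ∈ s, C i ⊆ B i) (hW : ∀ i ∉ t, Disjoint W (B i)) :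
    (⋃ i ∈ s, C i) ∩ W ⊆ ⋃ i ∈ s ∩ t, C i := by
  rintro x ⟨hx, hxW⟩
  obtain ⟨i, hi, hxi⟩ := mem_iUnion₂.1 hx
  have hit : i ∈ t := by
    by_contra hit
    exact disjoint_left.1 (hW i hit) hxW (hC i hi hxi)
  exact mem_biUnion ⟨hi, hit⟩ hxi

theorem disjoint_frontier_biUnion_clopens {X ι : Type*} [TopologicalSpace X]
    {B C D : ι → Clopens X} (hB : Pairwise (Disjoint on B)) {s t : Set ι}
    (hst : (s ∩ t).Finite) (hC : ∀ i ∈ s, C i ≤ B i) (hD : ∀ i ∈ t, D i ≤ B i)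
    {S : Clopens X} (hS : IsLUB (D '' t) S) :
    Disjoint (frontier (⋃ i ∈ s, (C i : Set X))) (frontier (⋃ i ∈ t, (D i : Set X))) := by
  have hSB : ∀ j ∉ t, Disjoint (S : Set X) (B j) := by
    intro j hj
    refine Clopens.coe_disjoint.2 (hS.disjoint_of_forall_disjoint ?_)
    rintro _ ⟨i, hi, rfl⟩
    exact (hB (ne_of_mem_of_not_mem hi hj)).mono_left (hD i hi)
  have hfrS : frontier (⋃ i ∈ t, (D i : Set X)) ⊆ S :=
    frontier_subset_closure.trans <| closure_minimal
      (iUnion₂_subset fun i hi => hS.1 (mem_image_of_mem D hi)) S.isClopen.isClosed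
  refine Disjoint.mono_right hfrS <| disjoint_frontier_of_inter_subset
    (isOpen_biUnion fun i _ => (C i).isClopen.isOpen) S.isClopen.isOpen
    (hst.isClosed_biUnion fun i _ => (C i).isClopen.isClosed)
    (biUnion_mono inter_subset_left fun _ _ => subset_rfl)
    (biUnion_inter_subset_of_disjoint (fun i hi => hC i hi) hSB)

theorem Ordinal.exists_lt_omega_one_forall_lt_of_countable {s : Set Ordinal} (hs : s.Countable)
    (hlt : ∀ ζ ∈ s, ζ < ω₁) : ∃ η < ω₁, ∀ ζ ∈ s, ζ < η := by
  have : Countable s := hs.to_subtype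
  refine ⟨⨆ ζ : s, Order.succ (ζ : Ordinal), iSup_lt_omega_one fun ζ => ?_, fun ζ hζ => ?_⟩
  · exact (Cardinal.isSuccLimit_omega 1).succ_lt (hlt ζ ζ.2)
  · exact (Order.lt_succ ζ).trans_le
      (Ordinal.le_iSup (fun ζ : s => Order.succ (ζ : Ordinal)) ⟨ζ, hζ⟩)

theorem MeasureTheory.Measure.exists_lt_omega_one_measure_eq_zero_of_pairwise_disjoint
    {Ω : Type*} [MeasurableSpace Ω] (ν : Measure Ω) [SFinite ν] {F : Ordinal → Set Ω}
    (hF : ∀ ζ < ω₁, MeasurableSet (F ζ))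
    (hdisj : ∀ ζ < ω₁, ∀ ξ < ω₁, ζ ≠ ξ → Disjoint (F ζ) (F ξ)) :
    ∃ η < ω₁, ∀ ζ, η ≤ ζ → ζ < ω₁ → ν (F ζ) = 0 := by
  have hcount : {ζ : Iio ω₁ | 0 < ν (F ζ)}.Countable :=
    Measure.countable_meas_pos_of_disjoint_iUnion (fun ζ => hF ζ ζ.2)
      fun ζ ξ h => hdisj ζ ζ.2 ξ ξ.2 (Subtype.coe_ne_coe.2 h)
  obtain ⟨η, hη, hbound⟩ := exists_lt_omega_one_forall_lt_of_countable (hcount.image Subtype.val)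
    (by rintro _ ⟨ζ, -, rfl⟩; exact ζ.2)
  refine ⟨η, hη, fun ζ hηζ hζ => ?_⟩
  by_contra hpos
  exact (hbound ζ ⟨⟨ζ, hζ⟩, pos_iff_ne_zero.2 hpos, rfl⟩).not_ge hηζ

theorem omega1_eq_omega_one : omega1 = ω₁ := Cardinal.ord_aleph 1

theorem boundaries_eventually_null_general
    {K : Type} [TopologicalSpace K]
    [MeasurableSpace K] [BorelSpace K]
    -- its Radon extension `μ̂`, a regular signed Borel measure
    (mhat : SignedMeasure K)
    -- an antichain in the algebra of clopen sets
    (B : ℕ → Clopens K)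
    (hB : ∀ i j, i ≠ j → B i ⊓ B j = ⊥)
    -- an almost disjoint family of infinite subsets of ω indexed by ζ < ω₁
    (A : Ordinal → Set ℕ)
    (hAD : ∀ ζ < omega1, ∀ ξ < omega1, ζ ≠ ξ → (A ζ ∩ A ξ).Finite)
    -- clopens `C ζ i ≤ B i` whose suprema exist
    (C : Ordinal → ℕ → Clopens K)
    (hC : ∀ ζ < omega1, ∀ i ∈ A ζ, C ζ i ≤ B i)
    (hsup : ∀ ζ < omega1, ∃ S : Clopens K, IsLUB {V | ∃ i ∈ A ζ, C ζ i = V} S) :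
    ∃ η < omega1, ∀ ζ, η ≤ ζ → ζ < omega1 →
      mhat.totalVariation (frontier (⋃ i ∈ A ζ, (C ζ i : Set K))) = 0 := by
  rw [omega1_eq_omega_one] at hAD hC hsup ⊢
  have hB' : Pairwise (Disjoint on B) := fun i j hij => disjoint_iff.2 (hB i j hij)
  refine mhat.totalVariation.exists_lt_omega_one_measure_eq_zero_of_pairwise_disjoint
    (fun _ _ => isClosed_frontier.measurableSet) fun ζ hζ ξ hξ hne => ?_
  obtain ⟨S, hS⟩ := hsup ξ hξ
  exact disjoint_frontier_biUnion_clopens hB' (hAD ζ hζ ξ hξ hne) (hC ζ hζ) (hC ξ hξ) hS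

theorem boundaries_eventually_null
    {K : Type} [TopologicalSpace K] [CompactSpace K] [T2Space K]
    [TotallyDisconnectedSpace K] [Infinite K]
    [MeasurableSpace K] [BorelSpace K]
    -- a bounded finitely additive measure `μ` on the algebra of clopen sets
    (μ : Clopens K → ℝ)
    (hadd : ∀ U V : Clopens K, U ⊓ V = ⊥ → μ (U ⊔ V) = μ U + μ V)
    (hbdd : ∃ M : ℝ, ∀ U V : Clopens K, U ⊓ V = ⊥ → |μ U| + |μ V| ≤ M)
    -- its Radon extension `μ̂`, a regular signed Borel measure
    (mhat : SignedMeasure K)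
    (hreg : mhat.totalVariation.Regular)
    (hext : ∀ U : Clopens K, mhat (U : Set K) = μ U)
    -- an antichain in the algebra of clopen sets
    (B : ℕ → Clopens K)
    (hB : ∀ i j, i ≠ j → B i ⊓ B j = ⊥)
    -- an almost disjoint family of infinite subsets of ω indexed by ζ < ω₁
    (A : Ordinal → Set ℕ)
    (hAinf : ∀ ζ < omega1, (A ζ).Infinite)
    (hAD : ∀ ζ < omega1, ∀ ξ < omega1, ζ ≠ ξ → (A ζ ∩ A ξ).Finite)
    -- clopens `C ζ i ≤ B i` whose suprema exist
    (C : Ordinal → ℕ → Clopens K)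
    (hC : ∀ ζ < omega1, ∀ i ∈ A ζ, C ζ i ≤ B i)
    (hsup : ∀ ζ < omega1, ∃ S : Clopens K, IsLUB {V | ∃ i ∈ A ζ, C ζ i = V} S) :
    ∃ η < omega1, ∀ ζ, η ≤ ζ → ζ < omega1 →
      mhat.totalVariation (frontier (⋃ i ∈ A ζ, (C ζ i : Set K))) = 0 :=
  boundaries_eventually_null_general mhat B hB A hAD C hC hsup
end
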